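/- Every matrix Δ in the cone C(r) satisfies ‖Δ‖_* ≤ 4·√(2r)·‖Δ‖_F. -/

import Mathlib

/-!
Split `Δ = Π(Δ) + M`. The cone condition and the triangle inequality for the nuclear norm give
`‖Δ‖_* ≤ 4 ‖M‖_*`. Since `M = P_U Δ + (1 - P_U) Δ P_V` has rank at most `2r`, Cauchy–Schwarz over
its nonzero singular values gives `‖M‖_* ≤ √(2r) ‖M‖_F`, and `‖M‖_F ≤ ‖Δ‖_F` because `Π` is an
orthogonal projection for the Frobenius inner product. The triangle inequality comes from the
duality `‖Y‖_* = max {tr (Gᵀ Y) : ‖G‖_op ≤ 1}`, the maximum being attained through an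
eigendecomposition of `Yᵀ Y`.
-/

open MeasureTheory ProbabilityTheory Matrix

/-- The (unordered) singular values of a real `m × n` matrix, indexed by `Fin n`:
the square roots of the eigenvalues of `Aᵀ * A`. -/
noncomputable def singVals {m n : ℕ} (A : Matrix (Fin m) (Fin n) ℝ) : Fin n → ℝ :=
  fun i => Real.sqrt ((show (Aᵀ * A).IsHermitian by
    simpa [Matrix.conjTranspose_eq_transpose_of_trivial] using
      Matrix.isHermitian_conjTranspose_mul_self A).eigenvalues i)

/-- The nuclear (trace) norm: the sum of the singular values. -/
noncomputable def nucNorm {m n : ℕ} (A : Matrix (Fin m) (Fin n) ℝ) : ℝ := ∑ i, singVals A i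

/-- The Frobenius norm. -/
noncomputable def frobNorm {m n : ℕ} (A : Matrix (Fin m) (Fin n) ℝ) : ℝ :=
  Real.sqrt (∑ i, ∑ j, (A i j) ^ 2)

/-- The operator norm: the largest singular value. -/
noncomputable def opNorm {m n : ℕ} (A : Matrix (Fin m) (Fin n) ℝ) : ℝ := ⨆ i, singVals A i

/-- `Π(Δ) = (I - U Uᵀ) Δ (I - V Vᵀ)`. -/
def projPerp {d T r : ℕ} (U : Matrix (Fin d) (Fin r) ℝ) (V : Matrix (Fin T) (Fin r) ℝ)
    (Δ : Matrix (Fin d) (Fin T) ℝ) : Matrix (Fin d) (Fin T) ℝ :=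
  (1 - U * Uᵀ) * Δ * (1 - V * Vᵀ)

/-- The cone `C(r) = {Δ : ‖Π(Δ)‖_* ≤ 3 ‖Δ - Π(Δ)‖_*}`. -/
noncomputable def coneC {d T r : ℕ} (U : Matrix (Fin d) (Fin r) ℝ)
    (V : Matrix (Fin T) (Fin r) ℝ) : Set (Matrix (Fin d) (Fin T) ℝ) :=
  {Δ | nucNorm (projPerp U V Δ) ≤ 3 * nucNorm (Δ - projPerp U V Δ)}

/-- The block-diagonal quadratic form `∑ t, Δ_tᵀ S_t Δ_t`. -/
noncomputable def quadSum {d T : ℕ} (S : Fin T → Matrix (Fin d) (Fin d) ℝ)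
    (Δ : Matrix (Fin d) (Fin T) ℝ) : ℝ :=
  ∑ t, (fun i => Δ i t) ⬝ᵥ (S t).mulVec (fun i => Δ i t)

/-- The restricted strong convexity condition for the block-diagonal matrix with blocks `S t`,
on the cone `cone`, with constant `κ`. -/
def RSC {d T : ℕ} (S : Fin T → Matrix (Fin d) (Fin d) ℝ)
    (cone : Set (Matrix (Fin d) (Fin T) ℝ)) (κ : ℝ) : Prop :=
  ∀ Δ ∈ cone, 2 * κ * (frobNorm Δ) ^ 2 ≤ quadSum S Δ

/-- The cone-restricted operator norm of the block-diagonal matrix with blocks `S t`. -/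
noncomputable def coneOpNorm {d T : ℕ} (S : Fin T → Matrix (Fin d) (Fin d) ℝ)
    (cone : Set (Matrix (Fin d) (Fin T) ℝ)) : ℝ :=
  sSup {c | ∃ Δ ∈ cone, frobNorm Δ = 1 ∧ c = |quadSum S Δ|}

theorem Matrix.isHermitian_transpose_mul_self {m n : Type*} [Fintype m]
    (A : Matrix m n ℝ) : (Aᵀ * A).IsHermitian := by
  simpa [conjTranspose_eq_transpose_of_trivial] using isHermitian_conjTranspose_mul_self A

theorem Matrix.rank_add_le {m n K : Type*} [Fintype n] [Field K] (A B : Matrix m n K) :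
    (A + B).rank ≤ A.rank + B.rank := by
  have hrange : LinearMap.range (A + B).mulVecLin ≤
      LinearMap.range A.mulVecLin ⊔ LinearMap.range B.mulVecLin := by
    rintro x ⟨v, rfl⟩
    rw [mulVecLin_add]
    exact Submodule.add_mem_sup ⟨v, rfl⟩ ⟨v, rfl⟩
  exact (Submodule.finrank_mono hrange).trans (Submodule.finrank_add_le_finrank_add_finrank _ _)

theorem Matrix.trace_transpose_mul_eq_sum {m n R : Type*} [Fintype m] [Fintype n]
    [NonUnitalNonAssocSemiring R] (A B : Matrix m n R) :
    (Aᵀ * B).trace = ∑ j, ∑ i, A i j * B i j := by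
  simp [trace, mul_apply]

section SingularValues

variable {m n : ℕ}

lemma singVals_nonneg (A : Matrix (Fin m) (Fin n) ℝ) (i : Fin n) : 0 ≤ singVals A i :=
  Real.sqrt_nonneg _

lemma frobNorm_nonneg (A : Matrix (Fin m) (Fin n) ℝ) : 0 ≤ frobNorm A :=
  Real.sqrt_nonneg _

lemma frobNorm_sq_eq_trace (A : Matrix (Fin m) (Fin n) ℝ) : frobNorm A ^ 2 = (Aᵀ * A).trace := by
  rw [frobNorm, Real.sq_sqrt (by positivity), trace_transpose_mul_eq_sum, Finset.sum_comm]
  simp only [sq]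

lemma singVals_sq (A : Matrix (Fin m) (Fin n) ℝ) (i : Fin n) :
    singVals A i ^ 2 = A.isHermitian_transpose_mul_self.eigenvalues i :=
  Real.sq_sqrt (eigenvalues_conjTranspose_mul_self_nonneg A i)

noncomputable def rightSingVecs (A : Matrix (Fin m) (Fin n) ℝ) : Matrix (Fin n) (Fin n) ℝ :=
  A.isHermitian_transpose_mul_self.eigenvectorUnitary

lemma rightSingVecs_transpose_mul_self (A : Matrix (Fin m) (Fin n) ℝ) :
    (rightSingVecs A)ᵀ * rightSingVecs A = 1 := by
  simpa [rightSingVecs, star_eq_conjTranspose, conjTranspose_eq_transpose_of_trivial] using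
    Matrix.mem_unitaryGroup_iff'.mp A.isHermitian_transpose_mul_self.eigenvectorUnitary.2

lemma rightSingVecs_mul_transpose_self (A : Matrix (Fin m) (Fin n) ℝ) :
    rightSingVecs A * (rightSingVecs A)ᵀ = 1 := by
  simpa [rightSingVecs, star_eq_conjTranspose, conjTranspose_eq_transpose_of_trivial] using
    Matrix.mem_unitaryGroup_iff.mp A.isHermitian_transpose_mul_self.eigenvectorUnitary.2

lemma gram_mul_rightSingVecs (A : Matrix (Fin m) (Fin n) ℝ) :
    (A * rightSingVecs A)ᵀ * (A * rightSingVecs A) = diagonal fun i => singVals A i ^ 2 := by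
  have h := A.isHermitian_transpose_mul_self.conjStarAlgAut_star_eigenvectorUnitary
  simp only [Unitary.conjStarAlgAut_apply, Unitary.coe_star, star_eq_conjTranspose,
    conjTranspose_eq_transpose_of_trivial, RCLike.ofReal_real_eq_id, Function.id_comp] at h
  simp only [singVals_sq, transpose_mul, Matrix.mul_assoc] at h ⊢
  exact h

end SingularValues

theorem Matrix.trace_transpose_mul_mul_of_mul_transpose_eq_one {m n R : Type*} [Fintype m]
    [Fintype n] [DecidableEq n] [CommSemiring R] {V : Matrix n n R} (hV : V * Vᵀ = 1)
    (A B : Matrix m n R) :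
    ((A * V)ᵀ * (B * V)).trace = (Aᵀ * B).trace := by
  calc ((A * V)ᵀ * (B * V)).trace = (Vᵀ * (Aᵀ * B * V)).trace := by
        simp only [transpose_mul, Matrix.mul_assoc]
    _ = (Aᵀ * B * (V * Vᵀ)).trace := by rw [trace_mul_comm, Matrix.mul_assoc]
    _ = (Aᵀ * B).trace := by rw [hV, Matrix.mul_one]

lemma inv_mul_sq_eq_self (x : ℝ) : x⁻¹ * x ^ 2 = x := by
  rcases eq_or_ne x 0 with rfl | hx
  · simp
  · field_simp

section NuclearNorm

variable {m n : ℕ}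

lemma frobNorm_sq_eq_sum_singVals_sq (A : Matrix (Fin m) (Fin n) ℝ) :
    frobNorm A ^ 2 = ∑ i, singVals A i ^ 2 := by
  rw [frobNorm_sq_eq_trace, ← trace_transpose_mul_mul_of_mul_transpose_eq_one
    (rightSingVecs_mul_transpose_self A), gram_mul_rightSingVecs, trace_diagonal]

lemma sum_sq_mul_rightSingVecs (A : Matrix (Fin m) (Fin n) ℝ) (i : Fin n) :
    ∑ k, (A * rightSingVecs A) k i ^ 2 = singVals A i ^ 2 := by
  have h := congr_fun (congr_fun (gram_mul_rightSingVecs A) i) i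
  rw [mul_apply] at h
  simpa only [transpose_apply, diagonal_apply_eq, sq] using h

lemma sum_sq_mul_le_one_of_posSemidef {G : Matrix (Fin m) (Fin n) ℝ}
    (hG : (1 - Gᵀ * G).PosSemidef) {V : Matrix (Fin n) (Fin n) ℝ} (hV : Vᵀ * V = 1) (i : Fin n) :
    ∑ k, (G * V) k i ^ 2 ≤ 1 := by
  have hconj : Vᵀ * (1 - Gᵀ * G) * V = 1 - (G * V)ᵀ * (G * V) := by
    rw [Matrix.mul_sub, Matrix.sub_mul, Matrix.mul_one, hV, transpose_mul]
    simp only [Matrix.mul_assoc]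
  have hdiag := (hG.conjTranspose_mul_mul_same V).diag_nonneg (i := i)
  rw [conjTranspose_eq_transpose_of_trivial, hconj, Matrix.sub_apply, one_apply_eq,
    mul_apply] at hdiag
  simpa only [transpose_apply, sq, sub_nonneg] using hdiag

/-- `(1 - Gᵀ * G).PosSemidef` says `‖G‖_op ≤ 1`. -/
lemma trace_transpose_mul_le_nucNorm {G : Matrix (Fin m) (Fin n) ℝ}
    (hG : (1 - Gᵀ * G).PosSemidef) (Y : Matrix (Fin m) (Fin n) ℝ) :
    (Gᵀ * Y).trace ≤ nucNorm Y := by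
  set V := rightSingVecs Y
  rw [← trace_transpose_mul_mul_of_mul_transpose_eq_one (rightSingVecs_mul_transpose_self Y),
    trace_transpose_mul_eq_sum, nucNorm]
  refine Finset.sum_le_sum fun i _ => ?_
  calc ∑ k, (G * V) k i * (Y * V) k i
      ≤ √(∑ k, (G * V) k i ^ 2) * √(∑ k, (Y * V) k i ^ 2) :=
        Real.sum_mul_le_sqrt_mul_sqrt _ _ _
    _ ≤ 1 * singVals Y i := by
        rw [sum_sq_mul_rightSingVecs, Real.sqrt_sq (singVals_nonneg Y i)]
        refine mul_le_mul_of_nonneg_right (Real.sqrt_le_one.mpr ?_) (singVals_nonneg Y i)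
        exact sum_sq_mul_le_one_of_posSemidef hG (rightSingVecs_transpose_mul_self Y) i
    _ = singVals Y i := one_mul _

/-- The contraction `Y V diag(σ⁻¹) Vᵀ` attains the bound; `0⁻¹ = 0` takes care of the zero
singular values. -/
lemma exists_posSemidef_trace_transpose_mul_eq_nucNorm (Y : Matrix (Fin m) (Fin n) ℝ) :
    ∃ G : Matrix (Fin m) (Fin n) ℝ, (1 - Gᵀ * G).PosSemidef ∧ (Gᵀ * Y).trace = nucNorm Y := by
  set V := rightSingVecs Y
  set g : Fin n → ℝ := fun i => (singVals Y i)⁻¹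
  have hgram : (Y * V)ᵀ * (Y * V) = diagonal fun i => singVals Y i ^ 2 := gram_mul_rightSingVecs Y
  have hGt : (Y * V * diagonal g * Vᵀ)ᵀ = V * diagonal g * (Y * V)ᵀ := by
    simp [transpose_mul, Matrix.mul_assoc]
  refine ⟨Y * V * diagonal g * Vᵀ, ?_, ?_⟩
  · have hGG : (Y * V * diagonal g * Vᵀ)ᵀ * (Y * V * diagonal g * Vᵀ) =
        V * diagonal (fun i => g i * singVals Y i ^ 2 * g i) * Vᵀ := by
      rw [hGt, ← diagonal_mul_diagonal, ← diagonal_mul_diagonal, ← hgram]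
      simp only [Matrix.mul_assoc]
    have hone : (1 : Matrix (Fin n) (Fin n) ℝ) = V * diagonal (fun _ => 1) * Vᵀ := by
      rw [diagonal_one, Matrix.mul_one, rightSingVecs_mul_transpose_self]
    rw [hGG, hone, ← Matrix.sub_mul, ← Matrix.mul_sub, diagonal_sub]
    have hdiag : (diagonal fun i => 1 - g i * singVals Y i ^ 2 * g i).PosSemidef :=
      PosSemidef.diagonal fun i => sub_nonneg.mpr (by
        simp only [g, inv_mul_sq_eq_self, mul_inv_le_one])
    simpa [conjTranspose_eq_transpose_of_trivial] using hdiag.mul_mul_conjTranspose_same V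
  · have hcycle : V * diagonal g * (Y * V)ᵀ * Y = V * (diagonal g * (Y * V)ᵀ * Y) := by
      simp only [Matrix.mul_assoc]
    have hrot : diagonal g * (Y * V)ᵀ * Y * V = diagonal g * ((Y * V)ᵀ * (Y * V)) := by
      simp only [Matrix.mul_assoc]
    rw [hGt, hcycle, trace_mul_comm, hrot, hgram, diagonal_mul_diagonal, trace_diagonal, nucNorm]
    exact Finset.sum_congr rfl fun i _ => inv_mul_sq_eq_self (singVals Y i)

lemma nucNorm_add_le (A B : Matrix (Fin m) (Fin n) ℝ) :
    nucNorm (A + B) ≤ nucNorm A + nucNorm B := by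
  obtain ⟨G, hG, hGAB⟩ := exists_posSemidef_trace_transpose_mul_eq_nucNorm (A + B)
  rw [← hGAB, Matrix.mul_add, trace_add]
  exact add_le_add (trace_transpose_mul_le_nucNorm hG A) (trace_transpose_mul_le_nucNorm hG B)

end NuclearNorm

section RankBound

variable {m n : ℕ}

lemma card_singVals_ne_zero (A : Matrix (Fin m) (Fin n) ℝ) :
    (Finset.univ.filter fun i => singVals A i ≠ 0).card = A.rank := by
  have hA := A.isHermitian_transpose_mul_self
  have hrank : (Aᵀ * A).rank = A.rank := rank_transpose_mul_self A
  rw [← hrank, hA.rank_eq_card_non_zero_eigs, Fintype.card_subtype]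
  refine congrArg Finset.card (Finset.filter_congr fun i _ => ?_)
  exact (Real.sqrt_eq_zero (eigenvalues_conjTranspose_mul_self_nonneg A i)).not

lemma nucNorm_le_sqrt_rank_mul_frobNorm (A : Matrix (Fin m) (Fin n) ℝ) :
    nucNorm A ≤ √A.rank * frobNorm A := by
  set s := Finset.univ.filter fun i => singVals A i ≠ 0
  have hnuc : nucNorm A = ∑ i ∈ s, singVals A i := by rw [nucNorm, Finset.sum_filter_ne_zero]
  have hsq : nucNorm A ^ 2 ≤ A.rank * frobNorm A ^ 2 := by
    calc nucNorm A ^ 2 ≤ s.card * ∑ i ∈ s, singVals A i ^ 2 := by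
          rw [hnuc]; exact sq_sum_le_card_mul_sum_sq
      _ ≤ A.rank * ∑ i, singVals A i ^ 2 := by
          rw [card_singVals_ne_zero]
          gcongr
          exact Finset.subset_univ s
      _ = A.rank * frobNorm A ^ 2 := by rw [frobNorm_sq_eq_sum_singVals_sq]
  calc nucNorm A = √(nucNorm A ^ 2) :=
        (Real.sqrt_sq (Finset.sum_nonneg fun i _ => singVals_nonneg A i)).symm
    _ ≤ √(A.rank * frobNorm A ^ 2) := Real.sqrt_le_sqrt hsq
    _ = √A.rank * frobNorm A := by
        rw [Real.sqrt_mul (Nat.cast_nonneg _), Real.sqrt_sq (frobNorm_nonneg A)]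

end RankBound

section Cone

variable {d T r : ℕ}

/-- Pythagoras for the Frobenius inner product: `P Δ Q` is the orthogonal projection of `Δ`. -/
lemma frobNorm_sub_mul_mul_le {P : Matrix (Fin d) (Fin d) ℝ} {Q : Matrix (Fin T) (Fin T) ℝ}
    (hP : IsIdempotentElem P) (hPt : Pᵀ = P) (hQ : IsIdempotentElem Q) (hQt : Qᵀ = Q)
    (Δ : Matrix (Fin d) (Fin T) ℝ) : frobNorm (Δ - P * Δ * Q) ≤ frobNorm Δ := by
  set N := P * Δ * Q
  have hNN : (Nᵀ * N).trace = (Δᵀ * N).trace := by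
    have hgram : Nᵀ * N = Q * (Δᵀ * P * Δ * Q) := by
      simp only [N, transpose_mul, hPt, hQt, Matrix.mul_assoc]
      rw [← Matrix.mul_assoc P P, hP.eq]
    rw [hgram, trace_mul_comm, Matrix.mul_assoc _ Q Q, hQ.eq]
    simp only [N, Matrix.mul_assoc]
  have hNΔ : (Nᵀ * Δ).trace = (Δᵀ * N).trace := by
    rw [← trace_transpose, transpose_mul, transpose_transpose]
  have hpyth : frobNorm (Δ - N) ^ 2 + frobNorm N ^ 2 = frobNorm Δ ^ 2 := by
    simp only [frobNorm_sq_eq_trace, transpose_sub, Matrix.sub_mul, Matrix.mul_sub, trace_sub,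
      hNN, hNΔ]
    ring
  exact (pow_le_pow_iff_left₀ (frobNorm_nonneg _) (frobNorm_nonneg Δ) two_ne_zero).mp
    (by linarith [sq_nonneg (frobNorm N)])

lemma isIdempotentElem_mul_transpose {U : Matrix (Fin d) (Fin r) ℝ} (hU : Uᵀ * U = 1) :
    IsIdempotentElem (U * Uᵀ) := by
  rw [IsIdempotentElem, Matrix.mul_assoc, ← Matrix.mul_assoc Uᵀ, hU, Matrix.one_mul]

lemma frobNorm_sub_projPerp_le {U : Matrix (Fin d) (Fin r) ℝ} {V : Matrix (Fin T) (Fin r) ℝ}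
    (hU : Uᵀ * U = 1) (hV : Vᵀ * V = 1) (Δ : Matrix (Fin d) (Fin T) ℝ) :
    frobNorm (Δ - projPerp U V Δ) ≤ frobNorm Δ :=
  frobNorm_sub_mul_mul_le (isIdempotentElem_mul_transpose hU).one_sub (by simp)
    (isIdempotentElem_mul_transpose hV).one_sub (by simp) Δ

lemma rank_sub_projPerp_le (U : Matrix (Fin d) (Fin r) ℝ) (V : Matrix (Fin T) (Fin r) ℝ)
    (Δ : Matrix (Fin d) (Fin T) ℝ) : (Δ - projPerp U V Δ).rank ≤ 2 * r := by
  have hsplit : Δ - projPerp U V Δ = U * (Uᵀ * Δ) + (1 - U * Uᵀ) * Δ * V * Vᵀ := by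
    simp only [projPerp, Matrix.mul_sub, Matrix.sub_mul, Matrix.one_mul, Matrix.mul_one,
      Matrix.mul_assoc]
    abel
  rw [hsplit, two_mul]
  refine (rank_add_le _ _).trans (add_le_add ?_ ?_)
  · exact (rank_mul_le_left _ _).trans (by simpa using U.rank_le_card_width)
  · exact (rank_mul_le_right _ _).trans (by simpa using Vᵀ.rank_le_card_height)

lemma nucNorm_le_four_mul_of_mem_coneC {U : Matrix (Fin d) (Fin r) ℝ}
    {V : Matrix (Fin T) (Fin r) ℝ} {Δ : Matrix (Fin d) (Fin T) ℝ} (hΔ : Δ ∈ coneC U V) :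
    nucNorm Δ ≤ 4 * nucNorm (Δ - projPerp U V Δ) := by
  calc nucNorm Δ = nucNorm (projPerp U V Δ + (Δ - projPerp U V Δ)) := by
        rw [add_sub_cancel]
    _ ≤ nucNorm (projPerp U V Δ) + nucNorm (Δ - projPerp U V Δ) := nucNorm_add_le _ _
    _ ≤ 4 * nucNorm (Δ - projPerp U V Δ) := by
        have hcone : nucNorm (projPerp U V Δ) ≤ 3 * nucNorm (Δ - projPerp U V Δ) := hΔ
        linarith

end Cone

theorem stmt5_general {d T r : ℕ}
    (U : Matrix (Fin d) (Fin r) ℝ) (V : Matrix (Fin T) (Fin r) ℝ)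
    (hU : Uᵀ * U = 1) (hV : Vᵀ * V = 1)
    (Δ : Matrix (Fin d) (Fin T) ℝ) (hΔ : Δ ∈ coneC U V) :
    nucNorm Δ ≤ 4 * Real.sqrt (2 * r) * frobNorm Δ := by
  set M := Δ - projPerp U V Δ
  have hrank : (M.rank : ℝ) ≤ 2 * r := by exact_mod_cast rank_sub_projPerp_le U V Δ
  calc nucNorm Δ ≤ 4 * nucNorm M := nucNorm_le_four_mul_of_mem_coneC hΔ
    _ ≤ 4 * (√M.rank * frobNorm M) := by gcongr; exact nucNorm_le_sqrt_rank_mul_frobNorm M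
    _ ≤ 4 * (√(2 * r) * frobNorm Δ) := by
        gcongr
        · exact frobNorm_nonneg M
        · exact frobNorm_sub_projPerp_le hU hV Δ
    _ = 4 * √(2 * r) * frobNorm Δ := (mul_assoc _ _ _).symm

/-- every `Δ` in the cone `C(r)` satisfies `‖Δ‖_* ≤ 4 √(2r) ‖Δ‖_F`. -/
theorem stmt5 {d T r : ℕ} (hd : 0 < d) (hT : 0 < T) (hr : 0 < r)
    (hrd : r ≤ d) (hrT : r ≤ T)
    (W : Matrix (Fin d) (Fin T) ℝ) (hrank : W.rank = r)
    (U : Matrix (Fin d) (Fin r) ℝ) (V : Matrix (Fin T) (Fin r) ℝ) (Dv : Fin r → ℝ)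
    (hU : Uᵀ * U = 1) (hV : Vᵀ * V = 1) (hDv : ∀ i, 0 < Dv i)
    (hW : W = U * Matrix.diagonal Dv * Vᵀ)
    (Δ : Matrix (Fin d) (Fin T) ℝ) (hΔ : Δ ∈ coneC U V) :
    nucNorm Δ ≤ 4 * Real.sqrt (2 * r) * frobNorm Δ :=
  stmt5_general U V hU hV Δ hΔ
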